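/- For a finite set W ⊆ 𝕍 and an orbit 𝒪 of a nominal set X, there are only finitely many elements of 𝒪 whose least support is contained in W. -/

import Mathlib

open Pointwise

/-- The subgroup of finite permutations of the atoms `ℕ`. -/
def FinPerm : Subgroup (Equiv.Perm ℕ) where
  carrier := {π | {v | π v ≠ v}.Finite}
  one_mem' := by simp
  mul_mem' := by
    intro a b ha hb
    refine (ha.union hb).subset ?_
    intro v hv
    simp only [Set.mem_setOf_eq, Equiv.Perm.mul_apply] at hv
    by_contra h
    simp only [Set.mem_union, Set.mem_setOf_eq, not_or, not_not] at h
    rw [h.2] at hv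
    exact hv h.1
  inv_mem' := by
    intro a ha
    refine ha.subset ?_
    intro v hv
    simp only [Set.mem_setOf_eq] at hv ⊢
    intro h
    exact hv (by conv_lhs => rw [← h]; simp)


/-- Equivariant maps between `FinPerm`-sets. -/
def Equivariant {X Y : Type*} [MulAction FinPerm X] [MulAction FinPerm Y] (f : X → Y) : Prop :=
  ∀ (π : FinPerm) (x : X), f (π • x) = π • f x

/-- A finite set of atoms supports an element. -/
def Supports {X : Type*} [MulAction FinPerm X] (S : Finset ℕ) (x : X) : Prop :=
  ∀ π : FinPerm, (∀ v ∈ S, π • v = v) → π • x = x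

/-- A nominal set: a `FinPerm`-set with a least finite support function. -/
class NominalSet (X : Type*) [MulAction FinPerm X] where
  supp : X → Finset ℕ
  supports_supp : ∀ x : X, Supports (supp x) x
  supp_least : ∀ (x : X) (S : Finset ℕ), Supports S x → supp x ⊆ S

open NominalSet

/-!
An element `y = π • x` of the orbit of `x` is determined by the values of `π` on `supp x`, since
`supp x` supports `x`. These values lie in `supp y`, so when `supp y ⊆ W` the element `y` is
determined by a map `supp x → W`, of which there are only finitely many.
-/

section

variable {X : Type*} [MulAction FinPerm X]

theorem Supports.smul {S : Finset ℕ} {x : X} (h : Supports S x) (π : FinPerm) :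
    Supports (S.image (π • ·)) (π • x) := by
  intro σ hσ
  have hconj : (π⁻¹ * σ * π) • x = x :=
    h _ fun v hv => by simp [mul_smul, hσ _ (Finset.mem_image_of_mem _ hv)]
  calc σ • π • x = π • (π⁻¹ * σ * π) • x := by simp [mul_smul]
    _ = π • x := by rw [hconj]

variable [NominalSet X]

theorem smul_mem_supp_smul {x : X} {v : ℕ} (hv : v ∈ supp x) (π : FinPerm) :
    π • v ∈ supp (π • x) := by
  have hsupp : Supports ((supp (π • x)).image (π⁻¹ • ·)) x := by
    simpa using (supports_supp (π • x)).smul π⁻¹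
  obtain ⟨w, hw, rfl⟩ := Finset.mem_image.mp (supp_least x _ hsupp hv)
  simpa using hw

theorem smul_eq_smul_of_eqOn_supp {x : X} {π σ : FinPerm} (h : ∀ v ∈ supp x, π • v = σ • v) :
    π • x = σ • x := by
  have hfix : (σ⁻¹ * π) • x = x := supports_supp x _ fun v hv => by simp [mul_smul, h v hv]
  calc π • x = σ • (σ⁻¹ * π) • x := by simp [mul_smul]
    _ = σ • x := by rw [hfix]

end

/-- For a finite set `W` of atoms and an orbit of a nominal set, only finitely many elements
of the orbit have least support contained in `W`. -/
theorem finite_supp_subset_in_orbit {X : Type*} [MulAction FinPerm X] [NominalSet X]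
    (W : Finset ℕ) (x : X) :
    {y ∈ MulAction.orbit FinPerm x | supp y ⊆ W}.Finite := by
  choose! π hπ using fun y (hy : y ∈ MulAction.orbit FinPerm x) => MulAction.mem_orbit_iff.mp hy
  let restrict : X → supp x → ℕ := fun y v => π y • (v : ℕ)
  have hmaps : restrict '' {y ∈ MulAction.orbit FinPerm x | supp y ⊆ W} ⊆
      {f | ∀ v, f v ∈ W} := by
    rintro _ ⟨y, ⟨hy, hyW⟩, rfl⟩ v
    rw [← hπ y hy] at hyW
    exact hyW (smul_mem_supp_smul v.2 (π y))
  have hinj : Set.InjOn restrict {y ∈ MulAction.orbit FinPerm x | supp y ⊆ W} := by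
    intro y hy z hz hyz
    rw [← hπ y hy.1, ← hπ z hz.1]
    exact smul_eq_smul_of_eqOn_supp fun v hv => congrFun hyz ⟨v, hv⟩
  exact Set.Finite.of_finite_image ((Set.Finite.pi' fun _ => W.finite_toSet).subset hmaps) hinj
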